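/- arXiv:0801.3065 — 4 statements merged into one kernel-verified Lean document; each statement's English description precedes it below -/
import Mathlib

section
/- The formula ∇x.(B x ∧ C x) ≡ (∇x. B x) ∧ (∇x. C x) is provable in LG. -/
/-- Simply typed λ-terms (types elided) over a signature with a countably
infinite set of nominal constants (`nom`), other constants (`cst`) and
variables (`var`, de Bruijn style). -/
inductive Tm : Type
  | nom : ℕ → Tm
  | cst : ℕ → Tm
  | var : ℕ → Tm
  | app : Tm → Tm → Tm
  | lam : Tm → Tm
  deriving DecidableEq

namespace Tm

/-- Action of a permutation of nominal constants on a term: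
`π.a = π(a)` for nominal constants, other constants and variables are fixed,
and the action distributes over application and abstraction. -/
def perm (π : Equiv.Perm ℕ) : Tm → Tm
  | nom a => nom (π a)
  | cst c => cst c
  | var x => var x
  | app m n => app (perm π m) (perm π n)
  | lam m => lam (perm π m)

/-- The support of a term: the set of nominal constants occurring in it. -/
def supp : Tm → Finset ℕ
  | nom a => {a}
  | cst _ => ∅
  | var _ => ∅
  | app m n => supp m ∪ supp n
  | lam m => supp m

/-- Renaming of variables (with proper treatment of binders). -/
def rename (f : ℕ → ℕ) : Tm → Tm
  | nom a => nom a
  | cst c => cst c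
  | var x => var (f x)
  | app m n => app (rename f m) (rename f n)
  | lam m => lam (rename (fun k => match k with | 0 => 0 | k+1 => f k + 1) m)

/-- Lifting a simultaneous substitution under a binder. -/
def upS (θ : ℕ → Tm) : ℕ → Tm
  | 0 => var 0
  | x+1 => rename Nat.succ (θ x)

/-- Capture-avoiding simultaneous substitution. -/
def subst (θ : ℕ → Tm) : Tm → Tm
  | nom a => nom a
  | cst c => cst c
  | var x => θ x
  | app m n => app (subst θ m) (subst θ n)
  | lam m => lam (subst (upS θ) m)

end Tm

/-- A finite permutation of nominal constants. -/
def FinitePerm (π : Equiv.Perm ℕ) : Prop := {a : ℕ | π a ≠ a}.Finite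

/-- A Σ-substitution: a substitution whose range contains no
nominal constants (all terms in the range have empty support). -/
def SigmaSub (θ : ℕ → Tm) : Prop := ∀ x, (θ x).supp = ∅

/-- First-order formulas of the logic, with quantifiers `all`, `ex` and the
generic quantifier `nab` (∇) binding de Bruijn index 0. -/
inductive Fm : Type
  | top : Fm
  | bot : Fm
  | atom : ℕ → List Tm → Fm
  | eq : Tm → Tm → Fm
  | natF : Tm → Fm
  | and : Fm → Fm → Fm
  | or : Fm → Fm → Fm
  | imp : Fm → Fm → Fm
  | all : Fm → Fm
  | ex : Fm → Fm
  | nab : Fm → Fm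

namespace Fm

/-- Action of a permutation of nominal constants on a formula. -/
def perm (π : Equiv.Perm ℕ) : Fm → Fm
  | top => top
  | bot => bot
  | atom p ts => atom p (ts.map (Tm.perm π))
  | eq s t => eq (Tm.perm π s) (Tm.perm π t)
  | natF t => natF (Tm.perm π t)
  | and B C => and (perm π B) (perm π C)
  | or B C => or (perm π B) (perm π C)
  | imp B C => imp (perm π B) (perm π C)
  | all B => all (perm π B)
  | ex B => ex (perm π B)
  | nab B => nab (perm π B)

/-- The support of a formula: the nominal constants occurring in it. -/
def supp : Fm → Finset ℕ
  | top => ∅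
  | bot => ∅
  | atom _ ts => ts.foldr (fun t s => t.supp ∪ s) ∅
  | eq s t => s.supp ∪ t.supp
  | natF t => t.supp
  | and B C => supp B ∪ supp C
  | or B C => supp B ∪ supp C
  | imp B C => supp B ∪ supp C
  | all B => supp B
  | ex B => supp B
  | nab B => supp B

/-- Capture-avoiding simultaneous substitution on formulas. -/
def substF (θ : ℕ → Tm) : Fm → Fm
  | top => top
  | bot => bot
  | atom p ts => atom p (ts.map (Tm.subst θ))
  | eq s t => eq (Tm.subst θ s) (Tm.subst θ t)
  | natF t => natF (Tm.subst θ t)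
  | and B C => and (substF θ B) (substF θ C)
  | or B C => or (substF θ B) (substF θ C)
  | imp B C => imp (substF θ B) (substF θ C)
  | all B => all (substF (Tm.upS θ) B)
  | ex B => ex (substF (Tm.upS θ) B)
  | nab B => nab (substF (Tm.upS θ) B)

/-- Instantiation of the outermost bound variable (index 0) by a term,
i.e. `B[t/x]`. -/
def inst (B : Fm) (t : Tm) : Fm :=
  substF (fun n => match n with | 0 => t | n+1 => Tm.var n) B

end Fm

namespace Tm

/-- Free variables of a term relative to a binder depth `k`. -/
def fv (k : ℕ) : Tm → Finset ℕ
  | nom _ => ∅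
  | cst _ => ∅
  | var x => if k ≤ x then {x - k} else ∅
  | app m n => fv k m ∪ fv k n
  | lam m => fv (k+1) m

end Tm

namespace Fm

/-- Free variables of a formula relative to a binder depth `k`. -/
def fv (k : ℕ) : Fm → Finset ℕ
  | top => ∅
  | bot => ∅
  | atom _ ts => ts.foldr (fun t s => t.fv k ∪ s) ∅
  | eq s t => s.fv k ∪ t.fv k
  | natF t => t.fv k
  | and B C => fv k B ∪ fv k C
  | or B C => fv k B ∪ fv k C
  | imp B C => fv k B ∪ fv k C
  | all B => fv (k+1) B
  | ex B => fv (k+1) B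
  | nab B => fv (k+1) B

end Fm

/-- Free variables of a context. -/
def fvCtx (Γ : List Fm) : Finset ℕ := Γ.foldr (fun B s => B.fv 0 ∪ s) ∅

/-- The (canonically ordered) list of nominal constants in the support of a
formula, as terms. -/
def suppNoms (B : Fm) : List Tm := ((Fm.supp B).sort (· ≤ ·)).map Tm.nom

/-- Iterated application. -/
def appList (t : Tm) (args : List Tm) : Tm := args.foldl Tm.app t

/-- The raised instantiation `h c⃗` of a fresh variable `h` applied to the
support `{c⃗}` of `B`, used by the ∀R and ∃L rules. -/
def raised (h : ℕ) (B : Fm) : Tm := appList (Tm.var h) (suppNoms B)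

/-- Provability in the sequent calculus `LG` (Figure 1 of the paper):
sequents `Σ ; Γ ⊢ C` with an equivariant identity rule `id_π`, multicut,
contraction, the usual intuitionistic rules, raising in ∀R/∃L, and the
∇ rules instantiating the quantified variable with a nominal constant not in
the support of the body.  The antecedent is treated as a multiset via an
exchange rule. -/
inductive Prov : List Fm → Fm → Prop
  | idPi {Γ B B'} (π π' : Equiv.Perm ℕ) :
      Fm.perm π B = Fm.perm π' B' → Prov (B :: Γ) B'
  | exch {Γ Γ' C} : Γ.Perm Γ' → Prov Γ C → Prov Γ' C
  | contr {Γ B C} : Prov (B :: B :: Γ) C → Prov (B :: Γ) C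
  | mc {Δ Γ B C} : Prov Δ B → Prov (B :: Γ) C → Prov (Δ ++ Γ) C
  | botL {Γ C} : Prov (Fm.bot :: Γ) C
  | topR {Γ} : Prov Γ Fm.top
  | andL1 {Γ B1 B2 C} : Prov (B1 :: Γ) C → Prov (Fm.and B1 B2 :: Γ) C
  | andL2 {Γ B1 B2 C} : Prov (B2 :: Γ) C → Prov (Fm.and B1 B2 :: Γ) C
  | andR {Γ B C} : Prov Γ B → Prov Γ C → Prov Γ (Fm.and B C)
  | orL {Γ B D C} : Prov (B :: Γ) C → Prov (D :: Γ) C → Prov (Fm.or B D :: Γ) C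
  | orR1 {Γ B1 B2} : Prov Γ B1 → Prov Γ (Fm.or B1 B2)
  | orR2 {Γ B1 B2} : Prov Γ B2 → Prov Γ (Fm.or B1 B2)
  | impL {Γ B D C} : Prov Γ B → Prov (D :: Γ) C → Prov (Fm.imp B D :: Γ) C
  | impR {Γ B C} : Prov (B :: Γ) C → Prov Γ (Fm.imp B C)
  | allL {Γ B C} (t : Tm) : Prov (Fm.inst B t :: Γ) C → Prov (Fm.all B :: Γ) C
  | allR {Γ B} (h : ℕ) : h ∉ fvCtx Γ ∪ (Fm.all B).fv 0 →
      Prov Γ (Fm.inst B (raised h B)) → Prov Γ (Fm.all B)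
  | exL {Γ B C} (h : ℕ) : h ∉ fvCtx Γ ∪ (Fm.ex B).fv 0 ∪ C.fv 0 →
      Prov (Fm.inst B (raised h B) :: Γ) C → Prov (Fm.ex B :: Γ) C
  | exR {Γ B} (t : Tm) : Prov Γ (Fm.inst B t) → Prov Γ (Fm.ex B)
  | nabL {Γ B C} (a : ℕ) : a ∉ Fm.supp B →
      Prov (Fm.inst B (Tm.nom a) :: Γ) C → Prov (Fm.nab B :: Γ) C
  | nabR {Γ B} (a : ℕ) : a ∉ Fm.supp B →
      Prov Γ (Fm.inst B (Tm.nom a)) → Prov Γ (Fm.nab B)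

/-- `B ≡ C` abbreviates `(B ⊃ C) ∧ (C ⊃ B)`. -/
def equivF (A B : Fm) : Fm := Fm.and (Fm.imp A B) (Fm.imp B A)

/-- `∇x.(B x ∧ C x) ≡ (∇x. B x) ∧ (∇x. C x)` is provable in LG. -/
theorem nabla_and (B C : Fm) :
    Prov [] (equivF (Fm.nab (Fm.and B C)) (Fm.and (Fm.nab B) (Fm.nab C))) := by
  obtain ⟨a, ha⟩ := Infinite.exists_notMem_finset (Fm.supp B ∪ Fm.supp C)
  have haB : a ∉ Fm.supp B := fun h => ha (Finset.mem_union_left _ h)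
  have haC : a ∉ Fm.supp C := fun h => ha (Finset.mem_union_right _ h)
  have haBC : a ∉ Fm.supp (Fm.and B C) := ha
  apply Prov.andR
  · apply Prov.impR
    apply Prov.andR
    · apply Prov.nabR a haB
      apply Prov.nabL a haBC
      exact Prov.andL1 (Prov.idPi 1 1 rfl)
    · apply Prov.nabR a haC
      apply Prov.nabL a haBC
      exact Prov.andL2 (Prov.idPi 1 1 rfl)
  · apply Prov.impR
    apply Prov.nabR a haBC
    show Prov _ (Fm.and (Fm.inst B (Tm.nom a)) (Fm.inst C (Tm.nom a)))
    apply Prov.andR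
    · apply Prov.andL1
      exact Prov.nabL a haB (Prov.idPi 1 1 rfl)
    · apply Prov.andL2
      exact Prov.nabL a haC (Prov.idPi 1 1 rfl)
end

section
/- The formula ∇x.(B x ⊃ C x) ≡ (∇x. B x) ⊃ (∇x. C x) is provable in LG. -/
/-- `∇x.(B x ⊃ C x) ≡ (∇x. B x) ⊃ (∇x. C x)` is provable in LG. -/
theorem nabla_imp (B C : Fm) :
    Prov [] (equivF (Fm.nab (Fm.imp B C)) (Fm.imp (Fm.nab B) (Fm.nab C))) := by
  obtain ⟨a, ha⟩ := Infinite.exists_notMem_finset (B.supp ∪ C.supp)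
  have haB : a ∉ B.supp := fun h => ha (Finset.mem_union_left _ h)
  have haC : a ∉ C.supp := fun h => ha (Finset.mem_union_right _ h)
  have haBC : a ∉ (Fm.imp B C).supp := ha
  have hid : ∀ (D : Fm) (Γ : List Fm), Prov (D :: Γ) D := fun D Γ =>
    Prov.idPi (Equiv.refl ℕ) (Equiv.refl ℕ) rfl
  apply Prov.andR
  · -- ∇(B⊃C) ⊃ (∇B ⊃ ∇C)
    apply Prov.impR
    apply Prov.impR
    apply Prov.nabR a haC
    apply Prov.exch (List.Perm.swap _ _ _).symm
    apply Prov.nabL a haBC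
    show Prov (Fm.imp (B.inst (Tm.nom a)) (C.inst (Tm.nom a)) :: [Fm.nab B])
        (C.inst (Tm.nom a))
    apply Prov.impL
    · exact Prov.nabL a haB (hid _ _)
    · exact hid _ _
  · -- (∇B ⊃ ∇C) ⊃ ∇(B⊃C)
    apply Prov.impR
    apply Prov.nabR a haBC
    show Prov [Fm.imp (Fm.nab B) (Fm.nab C)]
        (Fm.imp (B.inst (Tm.nom a)) (C.inst (Tm.nom a)))
    apply Prov.impR
    apply Prov.exch (List.Perm.swap _ _ _).symm
    apply Prov.impL
    · exact Prov.nabR a haB (hid _ _)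
    · exact Prov.nabL a haC (hid _ _)
end

section
/- The formula ∇x∇y. B x y ≡ ∇y∇x. B x y is provable in LG. -/
/-- The substitution exchanging the two outermost bound variables
(de Bruijn indices 0 and 1). -/
def swap01 : ℕ → Tm :=
  fun n => match n with
    | 0 => Tm.var 1
    | 1 => Tm.var 0
    | n => Tm.var n

namespace Tm

lemma rename_ext {f g : ℕ → ℕ} (h : ∀ x, f x = g x) (t : Tm) :
    rename f t = rename g t := congrFun (congrArg rename (funext h)) t

lemma subst_ext {θ θ' : ℕ → Tm} (h : ∀ x, θ x = θ' x) (t : Tm) :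
    subst θ t = subst θ' t := congrFun (congrArg subst (funext h)) t

end Tm

lemma Fm.substF_ext {θ θ' : ℕ → Tm} (h : ∀ x, θ x = θ' x) (B : Fm) :
    Fm.substF θ B = Fm.substF θ' B :=
  congrFun (congrArg Fm.substF (funext h)) B

namespace Tm

lemma rename_rename (t : Tm) : ∀ f g : ℕ → ℕ,
    rename f (rename g t) = rename (fun x => f (g x)) t := by
  induction t with
  | nom a => intros; rfl
  | cst c => intros; rfl
  | var x => intros; rfl
  | app m n ihm ihn => intro f g; simp [rename, ihm, ihn]
  | lam m ih =>
      intro f g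
      simp only [rename, ih]
      congr 1
      apply rename_ext
      intro k; cases k <;> rfl

lemma subst_rename (t : Tm) : ∀ (θ : ℕ → Tm) (f : ℕ → ℕ),
    subst θ (rename f t) = subst (fun x => θ (f x)) t := by
  induction t with
  | nom a => intros; rfl
  | cst c => intros; rfl
  | var x => intros; rfl
  | app m n ihm ihn => intro θ f; simp [rename, subst, ihm, ihn]
  | lam m ih =>
      intro θ f
      simp only [rename, subst, ih]
      congr 1
      apply subst_ext
      intro k; cases k <;> rfl

lemma rename_subst (t : Tm) : ∀ (f : ℕ → ℕ) (θ : ℕ → Tm),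
    rename f (subst θ t) = subst (fun x => rename f (θ x)) t := by
  induction t with
  | nom a => intros; rfl
  | cst c => intros; rfl
  | var x => intros; rfl
  | app m n ihm ihn => intro f θ; simp [rename, subst, ihm, ihn]
  | lam m ih =>
      intro f θ
      simp only [rename, subst, ih]
      congr 1
      apply subst_ext
      intro k
      cases k with
      | zero => rfl
      | succ k =>
          show rename _ (rename Nat.succ (θ k)) = rename Nat.succ (rename f (θ k))
          rw [rename_rename, rename_rename]

lemma subst_subst (t : Tm) : ∀ θ₂ θ₁ : ℕ → Tm,
    subst θ₂ (subst θ₁ t) = subst (fun x => subst θ₂ (θ₁ x)) t := by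
  induction t with
  | nom a => intros; rfl
  | cst c => intros; rfl
  | var x => intros; rfl
  | app m n ihm ihn => intro θ₂ θ₁; simp [subst, ihm, ihn]
  | lam m ih =>
      intro θ₂ θ₁
      simp only [subst, ih]
      congr 1
      apply subst_ext
      intro k
      cases k with
      | zero => rfl
      | succ k =>
          show subst (upS θ₂) (rename Nat.succ (θ₁ k))
              = rename Nat.succ (subst θ₂ (θ₁ k))
          rw [subst_rename, rename_subst]
          rfl

lemma perm_rename (π : Equiv.Perm ℕ) (t : Tm) : ∀ f : ℕ → ℕ,
    perm π (rename f t) = rename f (perm π t) := by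
  induction t with
  | nom a => intros; rfl
  | cst c => intros; rfl
  | var x => intros; rfl
  | app m n ihm ihn => intro f; simp [rename, perm, ihm, ihn]
  | lam m ih => intro f; simp [rename, perm, ih]

lemma perm_subst (π : Equiv.Perm ℕ) (t : Tm) : ∀ θ : ℕ → Tm,
    perm π (subst θ t) = subst (fun x => perm π (θ x)) (perm π t) := by
  induction t with
  | nom a => intros; rfl
  | cst c => intros; rfl
  | var x => intros; rfl
  | app m n ihm ihn => intro θ; simp [subst, perm, ihm, ihn]
  | lam m ih =>
      intro θ
      simp only [subst, perm, ih]
      congr 1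
      apply subst_ext
      intro k
      cases k with
      | zero => rfl
      | succ k =>
          show perm π (rename Nat.succ (θ k)) = rename Nat.succ (perm π (θ k))
          rw [perm_rename]

lemma supp_rename (t : Tm) : ∀ f : ℕ → ℕ, supp (rename f t) = supp t := by
  induction t with
  | nom a => intros; rfl
  | cst c => intros; rfl
  | var x => intro f; simp [rename, supp]
  | app m n ihm ihn => intro f; simp [rename, supp, ihm, ihn]
  | lam m ih => intro f; simp [rename, supp, ih]

lemma supp_subst_subset (t : Tm) : ∀ (θ : ℕ → Tm) (S : Finset ℕ),
    (∀ x, supp (θ x) ⊆ S) → supp (subst θ t) ⊆ supp t ∪ S := by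
  induction t with
  | nom a => intro θ S h; simp [subst, supp]
  | cst c => intro θ S h; simp [subst, supp]
  | var x =>
      intro θ S h
      simp only [subst, supp]
      exact (h x).trans (Finset.subset_union_right)
  | app m n ihm ihn =>
      intro θ S h
      simp only [subst, supp]
      apply Finset.union_subset
      · exact (ihm θ S h).trans (by intro a; simp; tauto)
      · exact (ihn θ S h).trans (by intro a; simp; tauto)
  | lam m ih =>
      intro θ S h
      simp only [subst, supp]
      apply ih
      intro x
      cases x with
      | zero => simp [upS, supp]
      | succ x =>
          show supp (rename Nat.succ (θ x)) ⊆ S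
          rw [supp_rename]
          exact h x

lemma perm_fix (t : Tm) : ∀ π : Equiv.Perm ℕ,
    (∀ a ∈ supp t, π a = a) → perm π t = t := by
  induction t with
  | nom a => intro π h; simp [perm, h a (by simp [supp])]
  | cst c => intros; rfl
  | var x => intros; rfl
  | app m n ihm ihn =>
      intro π h
      simp only [perm]
      rw [ihm π (fun a ha => h a (by simp [supp]; exact Or.inl ha)),
          ihn π (fun a ha => h a (by simp [supp]; exact Or.inr ha))]
  | lam m ih =>
      intro π h
      simp only [perm]
      rw [ih π h]

end Tm

namespace Fm

lemma substF_substF (B : Fm) : ∀ θ₂ θ₁ : ℕ → Tm,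
    substF θ₂ (substF θ₁ B) = substF (fun x => Tm.subst θ₂ (θ₁ x)) B := by
  induction B with
  | top => intros; rfl
  | bot => intros; rfl
  | atom p ts =>
      intro θ₂ θ₁
      simp only [substF, List.map_map]
      congr 1
      apply List.map_congr_left
      intro t _
      exact Tm.subst_subst t θ₂ θ₁
  | eq s t => intro θ₂ θ₁; simp [substF, Tm.subst_subst]
  | natF t => intro θ₂ θ₁; simp [substF, Tm.subst_subst]
  | and C D ihC ihD => intro θ₂ θ₁; simp [substF, ihC, ihD]
  | or C D ihC ihD => intro θ₂ θ₁; simp [substF, ihC, ihD]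
  | imp C D ihC ihD => intro θ₂ θ₁; simp [substF, ihC, ihD]
  | all C ih =>
      intro θ₂ θ₁
      simp only [substF, ih]
      congr 1
      apply Fm.substF_ext
      intro k
      cases k with
      | zero => rfl
      | succ k =>
          show Tm.subst (Tm.upS θ₂) (Tm.rename Nat.succ (θ₁ k))
              = Tm.rename Nat.succ (Tm.subst θ₂ (θ₁ k))
          rw [Tm.subst_rename, Tm.rename_subst]; rfl
  | ex C ih =>
      intro θ₂ θ₁
      simp only [substF, ih]
      congr 1
      apply Fm.substF_ext
      intro k
      cases k with
      | zero => rfl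
      | succ k =>
          show Tm.subst (Tm.upS θ₂) (Tm.rename Nat.succ (θ₁ k))
              = Tm.rename Nat.succ (Tm.subst θ₂ (θ₁ k))
          rw [Tm.subst_rename, Tm.rename_subst]; rfl
  | nab C ih =>
      intro θ₂ θ₁
      simp only [substF, ih]
      congr 1
      apply Fm.substF_ext
      intro k
      cases k with
      | zero => rfl
      | succ k =>
          show Tm.subst (Tm.upS θ₂) (Tm.rename Nat.succ (θ₁ k))
              = Tm.rename Nat.succ (Tm.subst θ₂ (θ₁ k))
          rw [Tm.subst_rename, Tm.rename_subst]; rfl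

lemma perm_substF (π : Equiv.Perm ℕ) (B : Fm) : ∀ θ : ℕ → Tm,
    perm π (substF θ B) = substF (fun x => Tm.perm π (θ x)) (perm π B) := by
  induction B with
  | top => intros; rfl
  | bot => intros; rfl
  | atom p ts =>
      intro θ
      simp only [perm, substF, List.map_map]
      congr 1
      apply List.map_congr_left
      intro t _
      exact Tm.perm_subst π t θ
  | eq s t => intro θ; simp [perm, substF, Tm.perm_subst]
  | natF t => intro θ; simp [perm, substF, Tm.perm_subst]
  | and C D ihC ihD => intro θ; simp [perm, substF, ihC, ihD]
  | or C D ihC ihD => intro θ; simp [perm, substF, ihC, ihD]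
  | imp C D ihC ihD => intro θ; simp [perm, substF, ihC, ihD]
  | all C ih =>
      intro θ
      simp only [perm, substF, ih]
      congr 1
      apply Fm.substF_ext
      intro k
      cases k with
      | zero => rfl
      | succ k =>
          show Tm.perm π (Tm.rename Nat.succ (θ k))
              = Tm.rename Nat.succ (Tm.perm π (θ k))
          rw [Tm.perm_rename]
  | ex C ih =>
      intro θ
      simp only [perm, substF, ih]
      congr 1
      apply Fm.substF_ext
      intro k
      cases k with
      | zero => rfl
      | succ k =>
          show Tm.perm π (Tm.rename Nat.succ (θ k))
              = Tm.rename Nat.succ (Tm.perm π (θ k))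
          rw [Tm.perm_rename]
  | nab C ih =>
      intro θ
      simp only [perm, substF, ih]
      congr 1
      apply Fm.substF_ext
      intro k
      cases k with
      | zero => rfl
      | succ k =>
          show Tm.perm π (Tm.rename Nat.succ (θ k))
              = Tm.rename Nat.succ (Tm.perm π (θ k))
          rw [Tm.perm_rename]

lemma supp_substF_subset (B : Fm) : ∀ (θ : ℕ → Tm) (S : Finset ℕ),
    (∀ x, (θ x).supp ⊆ S) → supp (substF θ B) ⊆ supp B ∪ S := by
  have hup : ∀ (θ : ℕ → Tm) (S : Finset ℕ), (∀ x, (θ x).supp ⊆ S) →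
      (∀ x, ((Tm.upS θ) x).supp ⊆ S) := by
    intro θ S h x
    cases x with
    | zero => simp [Tm.upS, Tm.supp]
    | succ x =>
        show (Tm.rename Nat.succ (θ x)).supp ⊆ S
        rw [Tm.supp_rename]; exact h x
  induction B with
  | top => intro θ S h; simp [substF, supp]
  | bot => intro θ S h; simp [substF, supp]
  | atom p ts =>
      intro θ S h
      simp only [substF, supp]
      induction ts with
      | nil => simp
      | cons t ts iht =>
          simp only [List.map_cons, List.foldr_cons]
          apply Finset.union_subset
          · exact (Tm.supp_subst_subset t θ S h).trans (by intro a; simp; tauto)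
          · exact iht.trans (by intro a; simp; tauto)
  | eq s t =>
      intro θ S h
      simp only [substF, supp]
      apply Finset.union_subset
      · exact (Tm.supp_subst_subset s θ S h).trans (by intro a; simp; tauto)
      · exact (Tm.supp_subst_subset t θ S h).trans (by intro a; simp; tauto)
  | natF t =>
      intro θ S h
      exact Tm.supp_subst_subset t θ S h
  | and C D ihC ihD =>
      intro θ S h
      simp only [substF, supp]
      apply Finset.union_subset
      · exact (ihC θ S h).trans (by intro a; simp; tauto)
      · exact (ihD θ S h).trans (by intro a; simp; tauto)
  | or C D ihC ihD =>
      intro θ S h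
      simp only [substF, supp]
      apply Finset.union_subset
      · exact (ihC θ S h).trans (by intro a; simp; tauto)
      · exact (ihD θ S h).trans (by intro a; simp; tauto)
  | imp C D ihC ihD =>
      intro θ S h
      simp only [substF, supp]
      apply Finset.union_subset
      · exact (ihC θ S h).trans (by intro a; simp; tauto)
      · exact (ihD θ S h).trans (by intro a; simp; tauto)
  | all C ih => intro θ S h; exact ih _ S (hup θ S h)
  | ex C ih => intro θ S h; exact ih _ S (hup θ S h)
  | nab C ih => intro θ S h; exact ih _ S (hup θ S h)

lemma perm_fixF (B : Fm) : ∀ π : Equiv.Perm ℕ,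
    (∀ a ∈ supp B, π a = a) → perm π B = B := by
  induction B with
  | top => intros; rfl
  | bot => intros; rfl
  | atom p ts =>
      intro π h
      simp only [perm]
      congr 1
      induction ts with
      | nil => rfl
      | cons t ts iht =>
          simp only [List.map_cons, List.cons.injEq]
          constructor
          · apply Tm.perm_fix
            intro a ha
            exact h a (by simp [supp]; exact Or.inl ha)
          · apply iht
            intro a ha
            apply h a
            simp only [supp, List.foldr_cons] at ha ⊢
            simp only [Finset.mem_union]
            right
            exact ha
  | eq s t =>
      intro π h
      simp only [perm]
      rw [Tm.perm_fix s π (fun a ha => h a (by simp [supp]; exact Or.inl ha)),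
          Tm.perm_fix t π (fun a ha => h a (by simp [supp]; exact Or.inr ha))]
  | natF t =>
      intro π h
      simp only [perm]
      rw [Tm.perm_fix t π h]
  | and C D ihC ihD =>
      intro π h
      simp only [perm]
      rw [ihC π (fun a ha => h a (by simp [supp]; exact Or.inl ha)),
          ihD π (fun a ha => h a (by simp [supp]; exact Or.inr ha))]
  | or C D ihC ihD =>
      intro π h
      simp only [perm]
      rw [ihC π (fun a ha => h a (by simp [supp]; exact Or.inl ha)),
          ihD π (fun a ha => h a (by simp [supp]; exact Or.inr ha))]
  | imp C D ihC ihD =>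
      intro π h
      simp only [perm]
      rw [ihC π (fun a ha => h a (by simp [supp]; exact Or.inl ha)),
          ihD π (fun a ha => h a (by simp [supp]; exact Or.inr ha))]
  | all C ih => intro π h; simp only [perm]; rw [ih π h]
  | ex C ih => intro π h; simp only [perm]; rw [ih π h]
  | nab C ih => intro π h; simp only [perm]; rw [ih π h]

end Fm

/-- The substitution mapping de Bruijn index 0 to `nom b`, 1 to `nom a`,
and shifting the remaining indices down by 2. -/
def sigAB (a b : ℕ) : ℕ → Tm :=
  fun n => match n with
    | 0 => Tm.nom b
    | 1 => Tm.nom a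
    | n+2 => Tm.var n

/-- The substitution used by `Fm.inst` for a term `t`. -/
def instSub0 (t : Tm) : ℕ → Tm :=
  fun n => match n with | 0 => t | n+1 => Tm.var n

lemma inst_eq (B : Fm) (t : Tm) : Fm.inst B t = Fm.substF (instSub0 t) B := rfl

lemma double_inst (C : Fm) (a b : ℕ) :
    Fm.substF (instSub0 (Tm.nom b)) (Fm.substF (Tm.upS (instSub0 (Tm.nom a))) C)
      = Fm.substF (sigAB a b) C := by
  rw [Fm.substF_substF]
  apply Fm.substF_ext
  intro k
  match k with
  | 0 => rfl
  | 1 => rfl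
  | (k+2) => rfl

lemma sig_swap01 (C : Fm) (a b : ℕ) :
    Fm.substF (sigAB a b) (Fm.substF swap01 C) = Fm.substF (sigAB b a) C := by
  rw [Fm.substF_substF]
  apply Fm.substF_ext
  intro k
  match k with
  | 0 => rfl
  | 1 => rfl
  | (k+2) => rfl

lemma perm_swap_sig (C : Fm) (a b : ℕ) (ha : a ∉ Fm.supp C) (hb : b ∉ Fm.supp C) :
    Fm.perm (Equiv.swap a b) (Fm.substF (sigAB a b) C) = Fm.substF (sigAB b a) C := by
  rw [Fm.perm_substF]
  rw [Fm.perm_fixF C (Equiv.swap a b) (fun c hc => by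
    apply Equiv.swap_apply_of_ne_of_ne
    · rintro rfl; exact ha hc
    · rintro rfl; exact hb hc)]
  apply Fm.substF_ext
  intro k
  match k with
  | 0 => show Tm.nom (Equiv.swap a b b) = Tm.nom a; rw [Equiv.swap_apply_right]
  | 1 => show Tm.nom (Equiv.swap a b a) = Tm.nom b; rw [Equiv.swap_apply_left]
  | (k+2) => rfl

lemma upS_inst_supp (a : ℕ) :
    ∀ x, Tm.supp (Tm.upS (instSub0 (Tm.nom a)) x) ⊆ {a} := by
  intro x
  match x with
  | 0 => simp [Tm.upS, Tm.supp]
  | 1 =>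
      show Tm.supp (Tm.rename Nat.succ (Tm.nom a)) ⊆ {a}
      rw [Tm.supp_rename]; simp [Tm.supp]
  | (x+2) =>
      show Tm.supp (Tm.rename Nat.succ (Tm.var (x+1))) ⊆ {a}
      rw [Tm.supp_rename]; simp [Tm.supp]

lemma perm_one (C : Fm) : Fm.perm 1 C = C :=
  Fm.perm_fixF C 1 (fun _ _ => rfl)

/-- `∇x∇y. B x y ≡ ∇y∇x. B x y` is provable in LG. -/
theorem nabla_exchange (B : Fm) :
    Prov [] (equivF (Fm.nab (Fm.nab B)) (Fm.nab (Fm.nab (Fm.substF swap01 B)))) := by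
  classical
  set n := (Fm.supp B).sup id with hn
  have hmem : ∀ c ∈ Fm.supp B, c ≤ n := fun c hc => Finset.le_sup (f := id) hc
  set a := n + 1 with hadef
  set b := n + 2 with hbdef
  have ha : a ∉ Fm.supp B := fun h => by have := hmem _ h; omega
  have hb : b ∉ Fm.supp B := fun h => by have := hmem _ h; omega
  have hswS : ∀ x : ℕ, Tm.supp (swap01 x) ⊆ (∅ : Finset ℕ) := by
    intro x
    match x with
    | 0 => simp [swap01, Tm.supp]
    | 1 => simp [swap01, Tm.supp]
    | (x+2) => simp [swap01, Tm.supp]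
  have hsw : Fm.supp (Fm.substF swap01 B) ⊆ Fm.supp B := by
    have := Fm.supp_substF_subset B swap01 ∅ hswS
    simpa using this
  have hup : ∀ (C : Fm) (c : ℕ),
      Fm.supp (Fm.substF (Tm.upS (instSub0 (Tm.nom c))) C) ⊆ Fm.supp C ∪ {c} :=
    fun C c => Fm.supp_substF_subset C _ {c} (upS_inst_supp c)
  have ha' : a ∉ Fm.supp (Fm.substF swap01 B) := fun h => ha (hsw h)
  have hb' : b ∉ Fm.supp (Fm.substF swap01 B) := fun h => hb (hsw h)
  have hbupB : b ∉ Fm.supp (Fm.substF (Tm.upS (instSub0 (Tm.nom a))) B) := by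
    intro h
    have := hup B a h
    simp only [Finset.mem_union, Finset.mem_singleton] at this
    rcases this with h1 | h1
    · exact hb h1
    · omega
  have hbupSw : b ∉ Fm.supp (Fm.substF (Tm.upS (instSub0 (Tm.nom a)))
      (Fm.substF swap01 B)) := by
    intro h
    have := hup (Fm.substF swap01 B) a h
    simp only [Finset.mem_union, Finset.mem_singleton] at this
    rcases this with h1 | h1
    · exact hb' h1
    · omega
  apply Prov.andR
  · -- ∇∇B ⊃ ∇∇(swap B)
    apply Prov.impR
    refine Prov.nabL a ?_ ?_
    · exact ha
    rw [inst_eq]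
    show Prov [Fm.nab (Fm.substF (Tm.upS (instSub0 (Tm.nom a))) B)] _
    refine Prov.nabL b ?_ ?_
    · exact hbupB
    rw [inst_eq, double_inst]
    refine Prov.nabR a ?_ ?_
    · exact ha'
    rw [inst_eq]
    show Prov _ (Fm.nab (Fm.substF (Tm.upS (instSub0 (Tm.nom a)))
        (Fm.substF swap01 B)))
    refine Prov.nabR b ?_ ?_
    · exact hbupSw
    rw [inst_eq, double_inst, sig_swap01]
    apply Prov.idPi (Equiv.swap a b) 1
    rw [perm_one, perm_swap_sig B a b ha hb]
  · -- ∇∇(swap B) ⊃ ∇∇B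
    apply Prov.impR
    refine Prov.nabL a ?_ ?_
    · exact ha'
    rw [inst_eq]
    show Prov [Fm.nab (Fm.substF (Tm.upS (instSub0 (Tm.nom a)))
        (Fm.substF swap01 B))] _
    refine Prov.nabL b ?_ ?_
    · exact hbupSw
    rw [inst_eq, double_inst, sig_swap01]
    refine Prov.nabR a ?_ ?_
    · exact ha
    rw [inst_eq]
    show Prov _ (Fm.nab (Fm.substF (Tm.upS (instSub0 (Tm.nom a))) B))
    refine Prov.nabR b ?_ ?_
    · exact hbupB
    rw [inst_eq, double_inst]
    apply Prov.idPi (Equiv.swap b a) 1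
    rw [perm_one, perm_swap_sig B b a hb ha]
end

section
/- Support extension holds in LG^ω: if Σ, h ; Γ ⊢ B[h a⃗ /x] is provable, where {a⃗} = supp(B), h ∉ Σ, and h does not occur free in Γ or B, and c⃗ is a list of nominal constants not in supp(B), then Σ, h' ; Γ ⊢ B[h' a⃗ c⃗ /x] is provable for a fresh variable h' ∉ Σ. -/
/-- Zero, for the natural-number type `nt`. -/
def zeroTm : Tm := Tm.cst 0
/-- Successor, for the natural-number type `nt`. -/
def succTm (t : Tm) : Tm := Tm.app (Tm.cst 1) t

/-- Derivability in `LG^ω`, the logic `LG` extended with equality rules,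
definition (fixed point) rules and natural number induction.

`Deriv u h Γ C` means: there is a derivation of the sequent `Σ ; Γ ⊢ C`
of height at most `h` (heights are ordinals, since `eqL` may have infinitely
many premises).  The parameter `u` gives, for each defined predicate `p` and
argument list `t⃗`, the instantiated body `B[t⃗/x⃗]` of its definition clause
`p x⃗ ≜ B`.  Each rule allows its premises at any strictly smaller height, so
`Deriv u h Γ C` is monotone in `h` and `ht(Π) ≤ h` is expressed directly. -/
inductive Deriv (u : ℕ → List Tm → Fm) : Ordinal → List Fm → Fm → Prop
  | idPi {h Γ B B'} (π π' : Equiv.Perm ℕ) :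
      Fm.perm π B = Fm.perm π' B' → Deriv u h (B :: Γ) B'
  | exch {h Γ Γ' C} : Γ.Perm Γ' → Deriv u h Γ C → Deriv u h Γ' C
  | contr {h h' Γ B C} : h' < h →
      Deriv u h' (B :: B :: Γ) C → Deriv u h (B :: Γ) C
  | mc {h h1 h2 Δ Γ B C} : h1 < h → h2 < h →
      Deriv u h1 Δ B → Deriv u h2 (B :: Γ) C → Deriv u h (Δ ++ Γ) C
  | botL {h Γ C} : Deriv u h (Fm.bot :: Γ) C
  | topR {h Γ} : Deriv u h Γ Fm.top
  | andL1 {h h' Γ B1 B2 C} : h' < h →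
      Deriv u h' (B1 :: Γ) C → Deriv u h (Fm.and B1 B2 :: Γ) C
  | andL2 {h h' Γ B1 B2 C} : h' < h →
      Deriv u h' (B2 :: Γ) C → Deriv u h (Fm.and B1 B2 :: Γ) C
  | andR {h h1 h2 Γ B C} : h1 < h → h2 < h →
      Deriv u h1 Γ B → Deriv u h2 Γ C → Deriv u h Γ (Fm.and B C)
  | orL {h h1 h2 Γ B D C} : h1 < h → h2 < h →
      Deriv u h1 (B :: Γ) C → Deriv u h2 (D :: Γ) C →
      Deriv u h (Fm.or B D :: Γ) C
  | orR1 {h h' Γ B1 B2} : h' < h → Deriv u h' Γ B1 → Deriv u h Γ (Fm.or B1 B2)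
  | orR2 {h h' Γ B1 B2} : h' < h → Deriv u h' Γ B2 → Deriv u h Γ (Fm.or B1 B2)
  | impL {h h1 h2 Γ B D C} : h1 < h → h2 < h →
      Deriv u h1 Γ B → Deriv u h2 (D :: Γ) C → Deriv u h (Fm.imp B D :: Γ) C
  | impR {h h' Γ B C} : h' < h →
      Deriv u h' (B :: Γ) C → Deriv u h Γ (Fm.imp B C)
  | allL {h h' Γ B C} (t : Tm) : h' < h →
      Deriv u h' (Fm.inst B t :: Γ) C → Deriv u h (Fm.all B :: Γ) C
  | allR {h h' Γ B} (hv : ℕ) : h' < h → hv ∉ fvCtx Γ ∪ (Fm.all B).fv 0 →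
      Deriv u h' Γ (Fm.inst B (raised hv B)) → Deriv u h Γ (Fm.all B)
  | exL {h h' Γ B C} (hv : ℕ) : h' < h →
      hv ∉ fvCtx Γ ∪ (Fm.ex B).fv 0 ∪ C.fv 0 →
      Deriv u h' (Fm.inst B (raised hv B) :: Γ) C →
      Deriv u h (Fm.ex B :: Γ) C
  | exR {h h' Γ B} (t : Tm) : h' < h →
      Deriv u h' Γ (Fm.inst B t) → Deriv u h Γ (Fm.ex B)
  | nabL {h h' Γ B C} (a : ℕ) : h' < h → a ∉ Fm.supp B →
      Deriv u h' (Fm.inst B (Tm.nom a) :: Γ) C → Deriv u h (Fm.nab B :: Γ) C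
  | nabR {h h' Γ B} (a : ℕ) : h' < h → a ∉ Fm.supp B →
      Deriv u h' Γ (Fm.inst B (Tm.nom a)) → Deriv u h Γ (Fm.nab B)
  | eqR {h Γ t} : Deriv u h Γ (Fm.eq t t)
  | eqL {h Γ C s t} (hf : (ℕ → Tm) → Ordinal) :
      (∀ θ, hf θ < h) →
      (∀ θ, SigmaSub θ → Tm.subst θ s = Tm.subst θ t →
        Deriv u (hf θ) (Γ.map (Fm.substF θ)) (Fm.substF θ C)) →
      Deriv u h (Fm.eq s t :: Γ) C
  | defL {h h' Γ C p ts} : h' < h →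
      Deriv u h' (u p ts :: Γ) C → Deriv u h (Fm.atom p ts :: Γ) C
  | defR {h h' Γ p ts} : h' < h →
      Deriv u h' Γ (u p ts) → Deriv u h Γ (Fm.atom p ts)
  | natRz {h Γ} : Deriv u h Γ (Fm.natF zeroTm)
  | natRs {h h' Γ I} : h' < h →
      Deriv u h' Γ (Fm.natF I) → Deriv u h Γ (Fm.natF (succTm I))
  | natL {h h1 h2 h3 Γ C D I} (j : ℕ) : h1 < h → h2 < h → h3 < h →
      j ∉ (Fm.all D).fv 0 →
      Deriv u h1 [] (Fm.inst D zeroTm) →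
      Deriv u h2 [Fm.inst D (Tm.var j)] (Fm.inst D (succTm (Tm.var j))) →
      Deriv u h3 (Fm.inst D I :: Γ) C →
      Deriv u h (Fm.natF I :: Γ) C

/-!
With the cut rule `mc` available, support extension is an instance of a stronger fact: the premise
of `∀R` with a fresh eigenvariable yields `Γ ⊢ ∀x.B`, and cutting that against `∀x.B ⊢ B[t/x]`
(an initial sequent under `∀L`) proves `Γ ⊢ B[t/x]` for every term `t`, in particular for
`t = h' a⃗ c⃗`. The heights of the given and of the required derivation may live in different
universes, so the height of a derivation is rebuilt in the target universe by induction.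
-/

namespace Ordinal

universe w

theorem exists_of_exists_lt₁ {P Q : Ordinal.{w} → Prop} (hP : ∃ h, P h)
    (rule : ∀ {h h'}, h' < h → P h' → Q h) : ∃ h, Q h :=
  let ⟨h', p⟩ := hP
  ⟨_, rule (Order.lt_succ h') p⟩

theorem exists_of_exists_lt₂ {P₁ P₂ Q : Ordinal.{w} → Prop} (hP₁ : ∃ h, P₁ h)
    (hP₂ : ∃ h, P₂ h) (rule : ∀ {h h₁ h₂}, h₁ < h → h₂ < h → P₁ h₁ → P₂ h₂ → Q h) :
    ∃ h, Q h := by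
  obtain ⟨h₁, p₁⟩ := hP₁
  obtain ⟨h₂, p₂⟩ := hP₂
  refine ⟨Order.succ (max h₁ h₂), rule ?_ ?_ p₁ p₂⟩ <;> exact Order.lt_succ_iff.mpr (by simp)

theorem exists_of_exists_lt₃ {P₁ P₂ P₃ Q : Ordinal.{w} → Prop} (hP₁ : ∃ h, P₁ h)
    (hP₂ : ∃ h, P₂ h) (hP₃ : ∃ h, P₃ h)
    (rule : ∀ {h h₁ h₂ h₃}, h₁ < h → h₂ < h → h₃ < h → P₁ h₁ → P₂ h₂ → P₃ h₃ → Q h) :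
    ∃ h, Q h := by
  obtain ⟨h₁, p₁⟩ := hP₁
  obtain ⟨h₂, p₂⟩ := hP₂
  obtain ⟨h₃, p₃⟩ := hP₃
  refine ⟨Order.succ (max h₁ (max h₂ h₃)), rule ?_ ?_ ?_ p₁ p₂ p₃⟩ <;>
    exact Order.lt_succ_iff.mpr (by simp)

end Ordinal

namespace Deriv

universe v w

variable {u : ℕ → List Tm → Fm}

theorem exists_height {h : Ordinal.{v}} {Γ : List Fm} {C : Fm} (d : Deriv u h Γ C) :
    ∃ h' : Ordinal.{w}, Deriv u h' Γ C := by
  induction d with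
  | idPi π π' e => exact ⟨0, .idPi π π' e⟩
  | exch p _ ih => exact ih.imp fun _ => .exch p
  | contr _ _ ih => exact Ordinal.exists_of_exists_lt₁ ih .contr
  | mc _ _ _ _ ih₁ ih₂ => exact Ordinal.exists_of_exists_lt₂ ih₁ ih₂ .mc
  | botL => exact ⟨0, .botL⟩
  | topR => exact ⟨0, .topR⟩
  | andL1 _ _ ih => exact Ordinal.exists_of_exists_lt₁ ih .andL1
  | andL2 _ _ ih => exact Ordinal.exists_of_exists_lt₁ ih .andL2
  | andR _ _ _ _ ih₁ ih₂ => exact Ordinal.exists_of_exists_lt₂ ih₁ ih₂ .andR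
  | orL _ _ _ _ ih₁ ih₂ => exact Ordinal.exists_of_exists_lt₂ ih₁ ih₂ .orL
  | orR1 _ _ ih => exact Ordinal.exists_of_exists_lt₁ ih .orR1
  | orR2 _ _ ih => exact Ordinal.exists_of_exists_lt₁ ih .orR2
  | impL _ _ _ _ ih₁ ih₂ => exact Ordinal.exists_of_exists_lt₂ ih₁ ih₂ .impL
  | impR _ _ ih => exact Ordinal.exists_of_exists_lt₁ ih .impR
  | allL t _ _ ih => exact Ordinal.exists_of_exists_lt₁ ih (.allL t)
  | allR hv _ hfresh _ ih => exact Ordinal.exists_of_exists_lt₁ ih (.allR hv · hfresh)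
  | exL hv _ hfresh _ ih => exact Ordinal.exists_of_exists_lt₁ ih (.exL hv · hfresh)
  | exR t _ _ ih => exact Ordinal.exists_of_exists_lt₁ ih (.exR t)
  | nabL a _ ha _ ih => exact Ordinal.exists_of_exists_lt₁ ih (.nabL a · ha)
  | nabR a _ ha _ ih => exact Ordinal.exists_of_exists_lt₁ ih (.nabR a · ha)
  | eqR => exact ⟨0, .eqR⟩
  | eqL _ _ _ ih =>
    choose! g hg using ih
    exact ⟨_, .eqL g (fun θ => (Ordinal.le_iSup g θ).trans_lt (Order.lt_succ _)) hg⟩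
  | defL _ _ ih => exact Ordinal.exists_of_exists_lt₁ ih .defL
  | defR _ _ ih => exact Ordinal.exists_of_exists_lt₁ ih .defR
  | natRz => exact ⟨0, .natRz⟩
  | natRs _ _ ih => exact Ordinal.exists_of_exists_lt₁ ih .natRs
  | natL j _ _ _ hj _ _ _ ih₁ ih₂ ih₃ =>
    exact Ordinal.exists_of_exists_lt₃ ih₁ ih₂ ih₃ (.natL j · · · hj)

theorem inst_of_inst_raised {h : Ordinal.{v}} {Γ : List Fm} {B : Fm} {hv : ℕ}
    (hfresh : hv ∉ fvCtx Γ ∪ (Fm.all B).fv 0) (d : Deriv u h Γ (B.inst (raised hv B)))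
    (t : Tm) : Deriv u (h + 2) Γ (B.inst t) := by
  have hAll : Deriv u (h + 1) Γ (Fm.all B) :=
    .allR hv (lt_add_one h) hfresh d
  have hInst : Deriv u 1 [Fm.all B] (B.inst t) := .allL t zero_lt_one (.idPi 1 1 rfl)
  simpa using Deriv.mc (Γ := []) ((add_lt_add_iff_left h).mpr one_lt_two)
    (one_lt_two.trans_le le_add_self) hAll hInst

end Deriv

theorem support_extension_general {u : ℕ → List Tm → Fm}
    {Γ : List Fm} {B : Fm} (hv hv' : ℕ) (cs : List ℕ)
    (hfresh : hv ∉ fvCtx Γ ∪ (Fm.all B).fv 0)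
    (hprov : ∃ h, Deriv u h Γ (Fm.inst B (raised hv B))) :
    ∃ h, Deriv u h Γ
      (Fm.inst B (appList (Tm.var hv') (suppNoms B ++ cs.map Tm.nom))) := by
  obtain ⟨h, d⟩ := hprov
  exact (d.inst_of_inst_raised hfresh _).exists_height

/-- support extension in LG^ω.  If `Σ, h ; Γ ⊢ B[h a⃗/x]` is
provable, where `{a⃗} = supp(B)` and `h` is fresh (not in `Σ`, not free in `Γ`
or `B`), and `c⃗` is a list of nominal constants not in `supp(B)`, then
`Σ, h' ; Γ ⊢ B[h' a⃗ c⃗/x]` is provable for a fresh variable `h'`. -/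
theorem support_extension {u : ℕ → List Tm → Fm}
    (hu : ∀ p ts θ, Fm.substF θ (u p ts) = u p (ts.map (Tm.subst θ)))
    {Γ : List Fm} {B : Fm} (hv hv' : ℕ) (cs : List ℕ)
    (hcs : ∀ c ∈ cs, c ∉ B.supp)
    (hfresh : hv ∉ fvCtx Γ ∪ (Fm.all B).fv 0)
    (hfresh' : hv' ∉ fvCtx Γ ∪ (Fm.all B).fv 0)
    (hprov : ∃ h, Deriv u h Γ (Fm.inst B (raised hv B))) :
    ∃ h, Deriv u h Γ
      (Fm.inst B (appList (Tm.var hv') (suppNoms B ++ cs.map Tm.nom))) :=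
  support_extension_general hv hv' cs hfresh hprov
end
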